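/- arXiv:1004.1263 — 3 statements merged into one kernel-verified Lean document; each statement's English description precedes it below -/
import Mathlib

section
/- Let β>2 and d>0. There exists a constant c=c(β,d)<∞ such that for every n≥1, every tuple f_1,…,f_n of probability generating functions satisfying the tail condition H(β,d), and every integer l with 1≤l≤⌈β⌉−1, the l-th factorial moment of the composition, F^{(l)}(1) = Σ_{j≥0} j(j−1)⋯(j−l+1) P_j, satisfies F^{(l)}(1) ≤ c · n^{l−1} · e^{S_n} · e^{(l−1)(S_n−M_n)}. -/
open Set Filter

noncomputable section

/-- Mean of a distribution `a` on ℕ. -/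
def pmfMean (a : ℕ → ℝ) : ℝ := ∑' k : ℕ, (k : ℝ) * a k

/-- Tail `q_k = ∑_{j > k} a_j` of a distribution `a` on ℕ. -/
def tailAt (a : ℕ → ℝ) (k : ℕ) : ℝ := ∑' j : ℕ, if k < j then a j else 0

/-- `a` is a probability distribution on ℕ with finite positive mean. -/
def IsOffspring (a : ℕ → ℝ) : Prop :=
  (∀ k, 0 ≤ a k) ∧ HasSum a 1 ∧ Summable (fun k : ℕ => (k : ℝ) * a k) ∧ 0 < pmfMean a

/-- Tail condition `H(β,d)`: `q_k ≤ d·q_0·min(m,1)·k^{-β}` for all `k ≥ 1`. -/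
def TailCond (β d : ℝ) (a : ℕ → ℝ) : Prop :=
  ∀ k : ℕ, 1 ≤ k → tailAt a k ≤ d * tailAt a 0 * min (pmfMean a) 1 * (k : ℝ) ^ (-β)

/-- Convolution of two distributions on ℕ. -/
def conv (a b : ℕ → ℝ) (j : ℕ) : ℝ := ∑ i ∈ Finset.range (j + 1), a i * b (j - i)

/-- `k`-fold convolution power of a distribution on ℕ. -/
def convPow (a : ℕ → ℝ) : ℕ → ℕ → ℝ
  | 0 => fun j => if j = 0 then 1 else 0
  | k + 1 => conv (convPow a k) a

/-- Distribution whose generating function is the composition `pgf p ∘ pgf a`: the law of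
the sum of a `p`-distributed number of i.i.d. `a`-distributed variables. -/
def pgfCompDist (p a : ℕ → ℝ) (j : ℕ) : ℝ := ∑' k : ℕ, p k * convPow a k j

/-- `envDist q n` is the distribution `(P_j)` on ℕ whose generating function is
`F = f_1 ∘ ⋯ ∘ f_n`, where `q i` is the distribution with generating function `f_{i+1}`;
i.e. the law of the branching process at time `n` started from one individual. -/
def envDist (q : ℕ → ℕ → ℝ) : ℕ → ℕ → ℝ
  | 0 => fun j => if j = 1 then 1 else 0
  | n + 1 => pgfCompDist (envDist q n) (q n)

/-- The associated random walk `S_k = log m_1 + ⋯ + log m_k`. -/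
def walkS (q : ℕ → ℕ → ℝ) (k : ℕ) : ℝ :=
  ∑ i ∈ Finset.range k, Real.log (pmfMean (q i))

/-- The minimum `M_n = min_{0 ≤ k ≤ n} S_k`. -/
def walkM (q : ℕ → ℕ → ℝ) (n : ℕ) : ℝ :=
  (Finset.range (n + 1)).inf' (by simp) (walkS q)

/-!
Write `F_n = f_1 ∘ ⋯ ∘ f_n`, so `F_{n+1} = F_n ∘ f_{n+1}`, and let `m = m_{n+1}`. Faà di Bruno's
formula at `s = 1` bounds `F_{n+1}^{(l)}(1)` by `∑_{r ≤ l} B_{l,r} F_n^{(r)}(1)`, where the partial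
Bell polynomials `B_{l,r}` are evaluated at the derivatives `f_{n+1}^{(j)}(1)`; `B_{l,0} = 0` for
`l ≥ 1` and `B_{l,l} = m^l`. Under `H(β,d)`, `f^{(j)}(1) = j ∑_k k(k-1)⋯(k-j+2) q_k ≤ K m` for
`j ≤ L = ⌈β⌉ - 1 < β`, since `∑_k k^{L-1-β}` converges; hence `B_{l,r} ≤ G m^r`.
Induction on `n` then gives `F_n^{(l)}(1) ≤ (G+1)^l n^{l-1} e^{S_n + (l-1)(S_n - M_n)}`: the
diagonal term multiplies the previous bound by `m^l`; for `r < l`,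
`m^r e^{S_n + (r-1)(S_n - M_n)} ≤ e^{S_{n+1} + (l-1)(S_{n+1} - M_{n+1})}`, so that term is at most
`G (G+1)^r n^{r-1}` times the new exponential; and `∑_{r ≤ l} n^{r-1} ≤ (n+1)^{l-1}`.
-/

open scoped ENNReal
open Finset

namespace Nat

theorem succ_descFactorial_succ_eq_add (k r : ℕ) :
    (k + 1).descFactorial (r + 1) = k.descFactorial (r + 1) + (r + 1) * k.descFactorial r := by
  rcases le_or_gt r k with h | h
  · rw [succ_descFactorial_succ, descFactorial_succ, ← Nat.add_mul]
    congr 1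
    omega
  · rw [descFactorial_eq_zero_iff_lt.2 h, descFactorial_eq_zero_iff_lt.2 (by omega : k < r + 1),
      descFactorial_eq_zero_iff_lt.2 (by omega : k + 1 < r + 1), mul_zero, add_zero]

theorem descFactorial_succ_eq_mul_sum (k r : ℕ) :
    k.descFactorial (r + 1) = (r + 1) * ∑ i ∈ range k, i.descFactorial r := by
  induction k with
  | zero => simp
  | succ k ih => rw [succ_descFactorial_succ_eq_add, ih, sum_range_succ, Nat.mul_add]

theorem add_descFactorial_eq_sum (x y l : ℕ) :
    (x + y).descFactorial l =
      ∑ u ∈ range (l + 1), l.choose u * (x.descFactorial u * y.descFactorial (l - u)) := by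
  rw [descFactorial_eq_factorial_mul_choose, add_choose_eq, mul_sum,
    Finset.Nat.sum_antidiagonal_eq_sum_range_succ_mk]
  refine sum_congr rfl fun u hu => ?_
  have hul : u ≤ l := Nat.lt_succ_iff.1 (mem_range.1 hu)
  rw [descFactorial_eq_factorial_mul_choose, descFactorial_eq_factorial_mul_choose,
    ← choose_mul_factorial_mul_factorial hul]
  ring

end Nat

theorem prod_range_natCast_sub_eq_descFactorial (j l : ℕ) :
    ∏ i ∈ range l, ((j : ℝ) - i) = j.descFactorial l := by
  rw [← descPochhammer_eval_eq_prod_range, descPochhammer_eval_eq_descFactorial]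

theorem sum_range_succ_pow_le_add_one_pow {R : Type*} [CommSemiring R] [PartialOrder R]
    [IsOrderedRing R] {x : R} (hx : 0 ≤ x) (l : ℕ) :
    ∑ s ∈ range (l + 1), x ^ s ≤ (x + 1) ^ l := by
  induction l with
  | zero => simp
  | succ l ih =>
    calc ∑ s ∈ range (l + 2), x ^ s = ∑ s ∈ range (l + 1), x ^ s + x * x ^ l := by
          rw [sum_range_succ _ (l + 1), pow_succ']
      _ ≤ (x + 1) ^ l + x * (x + 1) ^ l := by
          gcongr
          exact le_add_of_nonneg_right zero_le_one
      _ = (x + 1) ^ (l + 1) := by ring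

namespace ENNReal

theorem tsum_sum_range_eq_tsum_tsum (F : ℕ → ℕ → ℝ≥0∞) :
    ∑' j, ∑ i ∈ range (j + 1), F i (j - i) = ∑' i, ∑' k, F i k := by
  simp_rw [← Finset.Nat.sum_antidiagonal_eq_sum_range_succ F, ← ENNReal.tsum_prod,
    ← (Finset.HasAntidiagonal.sigmaAntidiagonalEquivProd).tsum_eq, ENNReal.tsum_sigma']
  exact tsum_congr fun j => (Finset.sum_coe_sort _ _).symm.trans (tsum_fintype _).symm

theorem ofReal_tsum_le {ι : Type*} {f : ι → ℝ} (hf : ∀ i, 0 ≤ f i) :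
    ENNReal.ofReal (∑' i, f i) ≤ ∑' i, ENNReal.ofReal (f i) := by
  by_cases h : Summable f
  · rw [ENNReal.ofReal_tsum_of_nonneg hf h]
  · simp [tsum_eq_zero_of_not_summable h]

end ENNReal

/-- `F^{(l)}(1)` for the generating function `F` of `a`, valued in `ℝ≥0∞` since it may diverge. -/
def factorialMoment (a : ℕ → ℝ) (l : ℕ) : ℝ≥0∞ :=
  ∑' j, (j.descFactorial l : ℝ≥0∞) * ENNReal.ofReal (a j)

section FactorialMoment

variable {a b : ℕ → ℝ}

theorem factorialMoment_zero (ha : ∀ k, 0 ≤ a k) (h : HasSum a 1) : factorialMoment a 0 = 1 := by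
  simp only [factorialMoment, Nat.descFactorial_zero, Nat.cast_one, one_mul]
  rw [← ENNReal.ofReal_tsum_of_nonneg ha h.summable, h.tsum_eq, ENNReal.ofReal_one]

theorem factorialMoment_one (ha : ∀ k, 0 ≤ a k) (h : Summable fun k : ℕ => (k : ℝ) * a k) :
    factorialMoment a 1 = ENNReal.ofReal (pmfMean a) := by
  rw [pmfMean, ENNReal.ofReal_tsum_of_nonneg (fun k => mul_nonneg k.cast_nonneg (ha k)) h]
  refine tsum_congr fun j => ?_
  rw [ENNReal.ofReal_mul j.cast_nonneg, ENNReal.ofReal_natCast, Nat.descFactorial_one]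

theorem factorialMoment_conv (ha : ∀ k, 0 ≤ a k) (hb : ∀ k, 0 ≤ b k) (l : ℕ) :
    factorialMoment (conv a b) l =
      ∑ u ∈ range (l + 1), l.choose u * (factorialMoment a u * factorialMoment b (l - u)) := by
  unfold factorialMoment
  calc ∑' j, (j.descFactorial l : ℝ≥0∞) * ENNReal.ofReal (conv a b j)
      = ∑' j, ∑ i ∈ range (j + 1), ((i + (j - i)).descFactorial l : ℝ≥0∞) *
          (ENNReal.ofReal (a i) * ENNReal.ofReal (b (j - i))) := by
        refine tsum_congr fun j => ?_
        rw [conv, ENNReal.ofReal_sum_of_nonneg fun i _ => mul_nonneg (ha i) (hb _), mul_sum]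
        refine sum_congr rfl fun i hi => ?_
        rw [ENNReal.ofReal_mul (ha i), Nat.add_sub_cancel' (Nat.lt_succ_iff.1 (mem_range.1 hi))]
    _ = ∑' i, ∑' k, ((i + k).descFactorial l : ℝ≥0∞) *
          (ENNReal.ofReal (a i) * ENNReal.ofReal (b k)) :=
        ENNReal.tsum_sum_range_eq_tsum_tsum fun i k => ((i + k).descFactorial l : ℝ≥0∞) *
          (ENNReal.ofReal (a i) * ENNReal.ofReal (b k))
    _ = ∑' i, ∑' k, ∑ u ∈ range (l + 1), (l.choose u : ℝ≥0∞) *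
          (((i.descFactorial u : ℝ≥0∞) * ENNReal.ofReal (a i)) *
            ((k.descFactorial (l - u) : ℝ≥0∞) * ENNReal.ofReal (b k))) := by
        refine tsum_congr fun i => tsum_congr fun k => ?_
        rw [Nat.add_descFactorial_eq_sum]
        push_cast
        rw [sum_mul]
        exact sum_congr rfl fun u _ => by ring
    _ = _ := by
        simp_rw [Summable.tsum_finsetSum fun _ _ => ENNReal.summable, ENNReal.tsum_mul_left,
          ENNReal.tsum_mul_right]

end FactorialMoment

/-- The partial Bell polynomial `B_{l,r}(μ 1, μ 2, …)` of Faà di Bruno's formula. The recursion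
splits off one block of size `l - u`; the factor `(r + 1)⁻¹` undoes the choice of that block. -/
def partialBell (μ : ℕ → ℝ≥0∞) : ℕ → ℕ → ℝ≥0∞
  | l, 0 => if l = 0 then 1 else 0
  | l, r + 1 => ((r : ℝ≥0∞) + 1)⁻¹ * ∑ u ∈ range l, l.choose u * (partialBell μ u r * μ (l - u))

section PartialBell

variable (μ : ℕ → ℝ≥0∞)

theorem add_one_mul_partialBell_add_one (l r : ℕ) :
    ((r : ℝ≥0∞) + 1) * partialBell μ l (r + 1) =
      ∑ u ∈ range l, l.choose u * (partialBell μ u r * μ (l - u)) := by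
  rw [partialBell, ← mul_assoc, ENNReal.mul_inv_cancel (by positivity) (by simp), one_mul]

theorem partialBell_eq_zero_of_lt {l r : ℕ} (h : l < r) : partialBell μ l r = 0 := by
  induction r generalizing l with
  | zero => omega
  | succ r ih =>
    rw [partialBell, sum_eq_zero fun u hu => ?_, mul_zero]
    rw [ih (by have := mem_range.1 hu; omega), zero_mul, mul_zero]

theorem partialBell_self (l : ℕ) : partialBell μ l l = μ 1 ^ l := by
  induction l with
  | zero => simp [partialBell]
  | succ l ih =>
    rw [partialBell, sum_eq_single_of_mem l (by simp) fun u hu hne => ?_]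
    · rw [Nat.choose_succ_self_right, ih, Nat.add_sub_cancel_left, Nat.cast_succ, ← mul_assoc,
        ENNReal.inv_mul_cancel (by positivity) (by simp), one_mul, pow_succ]
    · rw [partialBell_eq_zero_of_lt μ (by have := mem_range.1 hu; omega), zero_mul, mul_zero]

theorem partialBell_le_pow_mul_pow {A M : ℝ≥0∞} (L : ℕ) (hA : 1 ≤ A)
    (hμ : ∀ j, 1 ≤ j → j ≤ L → μ j ≤ A * M) {l : ℕ} (hl : l ≤ L) (r : ℕ) :
    partialBell μ l r ≤ (2 ^ L * A) ^ l * M ^ r := by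
  have hB : 1 ≤ 2 ^ L * A := one_le_mul (one_le_pow₀ one_le_two) hA
  induction r generalizing l with
  | zero =>
    rw [partialBell, pow_zero, mul_one]
    split_ifs
    · exact one_le_pow₀ hB
    · exact zero_le
  | succ r ih =>
    rcases l with _ | k
    · simp [partialBell]
    have hsum : ∑ u ∈ range (k + 1), ((k + 1).choose u : ℝ≥0∞) ≤ 2 ^ L := by
      calc ∑ u ∈ range (k + 1), ((k + 1).choose u : ℝ≥0∞)
          ≤ ∑ u ∈ range (k + 2), ((k + 1).choose u : ℝ≥0∞) :=
            sum_le_sum_of_subset (range_subset_range.2 (Nat.le_succ _))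
        _ = 2 ^ (k + 1) := by exact_mod_cast Nat.sum_range_choose (k + 1)
        _ ≤ 2 ^ L := pow_le_pow_right₀ one_le_two hl
    calc partialBell μ (k + 1) (r + 1)
        ≤ ∑ u ∈ range (k + 1), (k + 1).choose u * (partialBell μ u r * μ (k + 1 - u)) :=
          mul_le_of_le_one_left' (ENNReal.inv_le_one.2 le_add_self)
      _ ≤ ∑ u ∈ range (k + 1), (k + 1).choose u * ((2 ^ L * A) ^ k * A * M ^ (r + 1)) := by
          refine sum_le_sum fun u hu => mul_le_mul_right ?_ _
          have hu : u ≤ k := Nat.lt_succ_iff.1 (mem_range.1 hu)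
          calc partialBell μ u r * μ (k + 1 - u) ≤ (2 ^ L * A) ^ u * M ^ r * (A * M) :=
                mul_le_mul' (ih (by omega)) (hμ _ (by omega) (by omega))
            _ ≤ (2 ^ L * A) ^ k * M ^ r * (A * M) := by gcongr
            _ = (2 ^ L * A) ^ k * A * M ^ (r + 1) := by ring
      _ ≤ 2 ^ L * ((2 ^ L * A) ^ k * A * M ^ (r + 1)) := by
          rw [← sum_mul]
          gcongr
      _ = (2 ^ L * A) ^ (k + 1) * M ^ (r + 1) := by ring

end PartialBell

theorem convPow_nonneg {a : ℕ → ℝ} (ha : ∀ k, 0 ≤ a k) (k j : ℕ) : 0 ≤ convPow a k j := by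
  induction k generalizing j with
  | zero => unfold convPow; positivity
  | succ k ih =>
    unfold convPow conv
    exact sum_nonneg fun i _ => mul_nonneg (ih i) (ha _)

theorem factorialMoment_convPow_le {a : ℕ → ℝ} (ha : ∀ k, 0 ≤ a k)
    (hmass : factorialMoment a 0 ≤ 1) (k l : ℕ) :
    factorialMoment (convPow a k) l ≤
      ∑' r, (k.descFactorial r : ℝ≥0∞) * partialBell (factorialMoment a) l r := by
  set μ := factorialMoment a
  induction k generalizing l with
  | zero =>
    rw [tsum_eq_single 0 fun r hr => by simp [Nat.pos_of_ne_zero hr]]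
    refine le_of_eq ?_
    rw [factorialMoment, tsum_eq_single 0 fun j hj => by simp [convPow, hj]]
    cases l <;> simp [convPow, partialBell]
  | succ k ih =>
    have hshift : ∀ f : ℕ → ℝ≥0∞, ∑' r, f r = f 0 + ∑' r, f (r + 1) :=
      fun f => tsum_eq_zero_add' ENNReal.summable
    calc factorialMoment (convPow a (k + 1)) l
        = ∑ u ∈ range (l + 1), l.choose u * (factorialMoment (convPow a k) u * μ (l - u)) :=
          factorialMoment_conv (convPow_nonneg ha k) ha l
      _ ≤ ∑ u ∈ range (l + 1), l.choose u *
            ((∑' r, (k.descFactorial r : ℝ≥0∞) * partialBell μ u r) * μ (l - u)) := by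
          gcongr with u
          exact ih u
      _ = ∑' r, (k.descFactorial r : ℝ≥0∞) *
            ∑ u ∈ range (l + 1), l.choose u * (partialBell μ u r * μ (l - u)) := by
          simp_rw [← ENNReal.tsum_mul_right, ← ENNReal.tsum_mul_left, mul_sum]
          rw [Summable.tsum_finsetSum fun _ _ => ENNReal.summable]
          exact sum_congr rfl fun u _ => tsum_congr fun r => by ring
      _ = ∑' r, (k.descFactorial r : ℝ≥0∞) *
            ((r + 1) * partialBell μ l (r + 1) + partialBell μ l r * μ 0) := by
          simp [sum_range_succ, add_one_mul_partialBell_add_one]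
      _ ≤ ∑' r, (k.descFactorial r : ℝ≥0∞) *
            ((r + 1) * partialBell μ l (r + 1) + partialBell μ l r) := by
          gcongr
          exact mul_le_of_le_one_right' hmass
      _ = ∑' r, ((k + 1).descFactorial r : ℝ≥0∞) * partialBell μ l r := by
          have hpascal : ∀ r, ((k + 1).descFactorial (r + 1) : ℝ≥0∞) * partialBell μ l (r + 1) =
              (k.descFactorial (r + 1) : ℝ≥0∞) * partialBell μ l (r + 1) +
                (k.descFactorial r : ℝ≥0∞) * ((r + 1) * partialBell μ l (r + 1)) := fun r => by
            rw [Nat.succ_descFactorial_succ_eq_add]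
            push_cast
            ring
          simp_rw [mul_add, ENNReal.tsum_add]
          rw [hshift fun r => ((k + 1).descFactorial r : ℝ≥0∞) * _,
            hshift fun r => (k.descFactorial r : ℝ≥0∞) * partialBell μ l r]
          simp only [hpascal, ENNReal.tsum_add, Nat.descFactorial_zero, Nat.cast_one]
          ring

theorem factorialMoment_pgfCompDist_le {p a : ℕ → ℝ} (hp : ∀ k, 0 ≤ p k) (ha : ∀ k, 0 ≤ a k)
    (hmass : factorialMoment a 0 ≤ 1) (l : ℕ) :
    factorialMoment (pgfCompDist p a) l ≤
      ∑' r, partialBell (factorialMoment a) l r * factorialMoment p r := by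
  calc factorialMoment (pgfCompDist p a) l
      ≤ ∑' j, (j.descFactorial l : ℝ≥0∞) * ∑' k, ENNReal.ofReal (p k * convPow a k j) := by
        unfold factorialMoment pgfCompDist
        gcongr with j
        exact ENNReal.ofReal_tsum_le fun k => mul_nonneg (hp k) (convPow_nonneg ha k j)
    _ = ∑' k, ENNReal.ofReal (p k) * factorialMoment (convPow a k) l := by
        simp_rw [ENNReal.ofReal_mul (hp _), factorialMoment, ← ENNReal.tsum_mul_left]
        rw [ENNReal.tsum_comm]
        exact tsum_congr fun k => tsum_congr fun j => by ring
    _ ≤ ∑' k, ENNReal.ofReal (p k) *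
          ∑' r, (k.descFactorial r : ℝ≥0∞) * partialBell (factorialMoment a) l r := by
        gcongr with k
        exact factorialMoment_convPow_le ha hmass k l
    _ = ∑' r, partialBell (factorialMoment a) l r * factorialMoment p r := by
        simp_rw [factorialMoment, ← ENNReal.tsum_mul_left]
        rw [ENNReal.tsum_comm]
        exact tsum_congr fun r => tsum_congr fun k => by ring

section Tail

variable {a : ℕ → ℝ}

theorem ofReal_tailAt (ha : ∀ k, 0 ≤ a k) (hs : Summable a) (i : ℕ) :
    ENNReal.ofReal (tailAt a i) = ∑' k, if i < k then ENNReal.ofReal (a k) else 0 := by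
  have hnn : ∀ k, 0 ≤ if i < k then a k else 0 := fun k => by split_ifs <;> simp [ha]
  rw [tailAt, ENNReal.ofReal_tsum_of_nonneg hnn
    (hs.of_nonneg_of_le hnn fun k => by split_ifs <;> simp [ha])]
  exact tsum_congr fun k => by split_ifs <;> simp

theorem tailAt_nonneg (ha : ∀ k, 0 ≤ a k) (i : ℕ) : 0 ≤ tailAt a i :=
  tsum_nonneg fun k => by split_ifs <;> simp [ha]

theorem tailAt_zero_le_one (ha : ∀ k, 0 ≤ a k) (h : HasSum a 1) : tailAt a 0 ≤ 1 := by
  have hnn : ∀ k, 0 ≤ if 0 < k then a k else 0 := fun k => by split_ifs <;> simp [ha]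
  have hle : ∀ k, (if 0 < k then a k else 0) ≤ a k := fun k => by split_ifs <;> simp [ha]
  rw [tailAt, ← h.tsum_eq]
  exact (h.summable.of_nonneg_of_le hnn hle).tsum_le_tsum hle h.summable

theorem factorialMoment_succ_eq_tsum_tailAt (ha : ∀ k, 0 ≤ a k) (hs : Summable a) (r : ℕ) :
    factorialMoment a (r + 1) =
      (r + 1) * ∑' i, (i.descFactorial r : ℝ≥0∞) * ENNReal.ofReal (tailAt a i) := by
  calc factorialMoment a (r + 1)
      = ∑' k, (r + 1) * ∑ i ∈ range k, (i.descFactorial r : ℝ≥0∞) * ENNReal.ofReal (a k) := by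
        refine tsum_congr fun k => ?_
        rw [Nat.descFactorial_succ_eq_mul_sum, ← sum_mul]
        push_cast
        ring
    _ = (r + 1) * ∑' i, ∑' k, if i < k then
          (i.descFactorial r : ℝ≥0∞) * ENNReal.ofReal (a k) else 0 := by
        rw [ENNReal.tsum_mul_left, ENNReal.tsum_comm]
        congr 1
        refine tsum_congr fun k => ?_
        rw [sum_eq_tsum_indicator]
        exact tsum_congr fun i => by simp [Set.indicator_apply]
    _ = (r + 1) * ∑' i, (i.descFactorial r : ℝ≥0∞) * ENNReal.ofReal (tailAt a i) := by
        simp_rw [ofReal_tailAt ha hs, ← ENNReal.tsum_mul_left, mul_ite, mul_zero]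

end Tail

def tailMomentConst (β d : ℝ) (L : ℕ) : ℝ :=
  max 1 (L * d * ∑' i : ℕ, (i : ℝ) ^ ((L : ℝ) - 1 - β))

theorem one_le_tailMomentConst (β d : ℝ) (L : ℕ) : 1 ≤ tailMomentConst β d L :=
  le_max_left _ _

section TailCond

variable {β d : ℝ} {a : ℕ → ℝ}

theorem tailAt_le_of_tailCond (hd : 0 ≤ d) (ha : IsOffspring a) (h : TailCond β d a) {i : ℕ}
    (hi : 1 ≤ i) : tailAt a i ≤ d * pmfMean a * (i : ℝ) ^ (-β) := by
  obtain ⟨ha0, hsum, -, hm⟩ := ha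
  have hq0 : tailAt a 0 * min (pmfMean a) 1 ≤ pmfMean a :=
    (mul_le_of_le_one_left (by positivity) (tailAt_zero_le_one ha0 hsum)).trans
      (min_le_left _ _)
  refine (h i hi).trans ?_
  rw [mul_assoc d]
  gcongr

theorem descFactorial_mul_tailAt_le_of_tailCond (hd : 0 ≤ d) (ha : IsOffspring a)
    (h : TailCond β d a) {L r i : ℕ} (hrL : r + 1 ≤ L) (hi : 1 ≤ i) :
    (i.descFactorial r : ℝ) * tailAt a i ≤ d * pmfMean a * (i : ℝ) ^ ((L : ℝ) - 1 - β) := by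
  have hm : 0 ≤ pmfMean a := ha.2.2.2.le
  have hdesc : (i.descFactorial r : ℝ) ≤ (i : ℝ) ^ ((L : ℝ) - 1) := by
    have hrL' : (r : ℝ) ≤ L - 1 := by
      rw [le_sub_iff_add_le]
      exact_mod_cast hrL
    calc (i.descFactorial r : ℝ) ≤ (i : ℝ) ^ r := by exact_mod_cast i.descFactorial_le_pow r
      _ = (i : ℝ) ^ (r : ℝ) := (Real.rpow_natCast _ _).symm
      _ ≤ (i : ℝ) ^ ((L : ℝ) - 1) :=
        Real.rpow_le_rpow_of_exponent_le (by exact_mod_cast hi) hrL'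
  calc (i.descFactorial r : ℝ) * tailAt a i
      ≤ (i : ℝ) ^ ((L : ℝ) - 1) * (d * pmfMean a * (i : ℝ) ^ (-β)) :=
        mul_le_mul hdesc (tailAt_le_of_tailCond hd ha h hi) (tailAt_nonneg ha.1 i) (by positivity)
    _ = d * pmfMean a * (i : ℝ) ^ ((L : ℝ) - 1 - β) := by
        rw [sub_eq_add_neg _ β, Real.rpow_add (by positivity)]
        ring

theorem factorialMoment_le_of_tailCond (hd : 0 ≤ d) (ha : IsOffspring a) (h : TailCond β d a)
    {L j : ℕ} (hLβ : (L : ℝ) < β) (hj : 1 ≤ j) (hjL : j ≤ L) :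
    factorialMoment a j ≤
      ENNReal.ofReal (tailMomentConst β d L) * ENNReal.ofReal (pmfMean a) := by
  have hK1 : 1 ≤ ENNReal.ofReal (tailMomentConst β d L) :=
    ENNReal.one_le_ofReal.2 (one_le_tailMomentConst β d L)
  obtain ⟨r, rfl⟩ : ∃ r, j = r + 1 := ⟨j - 1, by omega⟩
  rcases Nat.eq_zero_or_pos r with rfl | hr
  · rw [factorialMoment_one ha.1 ha.2.2.1]
    exact le_mul_of_one_le_left' hK1
  set m := pmfMean a
  have hm : 0 ≤ m := ha.2.2.2.le
  have hZ : Summable fun i : ℕ => (i : ℝ) ^ ((L : ℝ) - 1 - β) :=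
    Real.summable_nat_rpow.2 (by linarith)
  have hterm : ∀ i : ℕ, (i.descFactorial r : ℝ≥0∞) * ENNReal.ofReal (tailAt a i) ≤
      ENNReal.ofReal (d * m * (i : ℝ) ^ ((L : ℝ) - 1 - β)) := by
    intro i
    rcases Nat.eq_zero_or_pos i with rfl | hi
    · simp [Nat.descFactorial_eq_zero_iff_lt.2 hr]
    rw [← ENNReal.ofReal_natCast, ← ENNReal.ofReal_mul (by positivity)]
    exact ENNReal.ofReal_le_ofReal (descFactorial_mul_tailAt_le_of_tailCond hd ha h hjL hi)
  calc factorialMoment a (r + 1)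
      = (r + 1) * ∑' i, (i.descFactorial r : ℝ≥0∞) * ENNReal.ofReal (tailAt a i) :=
        factorialMoment_succ_eq_tsum_tailAt ha.1 ha.2.1.summable r
    _ ≤ L * ∑' i : ℕ, ENNReal.ofReal (d * m * (i : ℝ) ^ ((L : ℝ) - 1 - β)) := by
        gcongr with i
        · exact_mod_cast hjL
        · exact hterm i
    _ = ENNReal.ofReal (L * d * ∑' i : ℕ, (i : ℝ) ^ ((L : ℝ) - 1 - β)) * ENNReal.ofReal m := by
        rw [← ENNReal.ofReal_tsum_of_nonneg (fun i => by positivity) (hZ.mul_left _), tsum_mul_left,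
          ← ENNReal.ofReal_natCast, ← ENNReal.ofReal_mul (by positivity),
          ← ENNReal.ofReal_mul (by positivity)]
        congr 1
        ring
    _ ≤ ENNReal.ofReal (tailMomentConst β d L) * ENNReal.ofReal m := by
        gcongr
        exact le_max_right _ _

end TailCond

theorem partialBell_factorialMoment_le_of_tailCond {β d : ℝ} {a : ℕ → ℝ} (hd : 0 ≤ d)
    (ha : IsOffspring a) (h : TailCond β d a) {L l : ℕ} (hLβ : (L : ℝ) < β) (hl : l ≤ L)
    (r : ℕ) :
    partialBell (factorialMoment a) l r ≤
      ENNReal.ofReal ((2 ^ L * tailMomentConst β d L) ^ L) * ENNReal.ofReal (pmfMean a) ^ r := by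
  have hK := one_le_tailMomentConst β d L
  have hK1 : 1 ≤ ENNReal.ofReal (tailMomentConst β d L) := ENNReal.one_le_ofReal.2 hK
  refine (partialBell_le_pow_mul_pow _ L hK1
    (fun j hj hjL => factorialMoment_le_of_tailCond hd ha h hLβ hj hjL) hl r).trans ?_
  rw [ENNReal.ofReal_pow (by positivity), ENNReal.ofReal_mul (by positivity),
    ENNReal.ofReal_pow zero_le_two, ENNReal.ofReal_ofNat]
  gcongr
  exact one_le_mul (one_le_pow₀ one_le_two) hK1

section Walk

variable (q : ℕ → ℕ → ℝ)

theorem walkS_succ (n : ℕ) : walkS q (n + 1) = walkS q n + Real.log (pmfMean (q n)) :=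
  sum_range_succ _ _

theorem walkM_le_walkS {n k : ℕ} (hk : k ≤ n) : walkM q n ≤ walkS q k :=
  inf'_le _ (mem_range.2 (Nat.lt_succ_of_le hk))

theorem walkM_succ_le (n : ℕ) : walkM q (n + 1) ≤ walkM q n :=
  le_inf' _ _ fun k hk => walkM_le_walkS q (by have := mem_range.1 hk; omega)

theorem walkM_zero : walkM q 0 = 0 := by
  simp [walkM, walkS]

theorem ofReal_pmfMean_pow_mul_exp_le {n : ℕ} (hm : 0 < pmfMean (q n)) {s l : ℕ} (hsl : s ≤ l) :
    ENNReal.ofReal (pmfMean (q n)) ^ (s + 1) *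
        ENNReal.ofReal (Real.exp (walkS q n + s * (walkS q n - walkM q n))) ≤
      ENNReal.ofReal (Real.exp (walkS q (n + 1) + l * (walkS q (n + 1) - walkM q (n + 1)))) := by
  rw [← ENNReal.ofReal_pow hm.le, ← ENNReal.ofReal_mul (by positivity)]
  refine ENNReal.ofReal_le_ofReal ?_
  rw [← Real.exp_log hm, ← Real.exp_nat_mul, ← Real.exp_add, Real.exp_le_exp]
  push_cast
  have hM := walkM_succ_le q n
  have hMS := walkM_le_walkS q (le_refl (n + 1))
  rw [walkS_succ] at hMS ⊢
  have hs : (s : ℝ) ≤ l := by exact_mod_cast hsl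
  nlinarith [mul_le_mul_of_nonneg_left hM s.cast_nonneg,
    mul_le_mul_of_nonneg_right hs (sub_nonneg.2 hMS)]

end Walk

theorem envDist_nonneg {q : ℕ → ℕ → ℝ} {n : ℕ} (hq : ∀ i < n, ∀ k, 0 ≤ q i k) (j : ℕ) :
    0 ≤ envDist q n j := by
  induction n generalizing j with
  | zero => unfold envDist; positivity
  | succ n ih =>
    exact tsum_nonneg fun k => mul_nonneg (ih (fun i hi => hq i (by omega)) k)
      (convPow_nonneg (hq n n.lt_succ_self) k j)

theorem factorialMoment_envDist_zero (q : ℕ → ℕ → ℝ) (l : ℕ) :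
    factorialMoment (envDist q 0) l = (Nat.descFactorial 1 l : ℝ≥0∞) := by
  rw [factorialMoment, tsum_eq_single 1 fun j hj => by simp [envDist, hj]]
  simp [envDist]

theorem factorialMoment_envDist_succ_le {q : ℕ → ℕ → ℝ} {n : ℕ}
    (hq : ∀ i < n + 1, IsOffspring (q i)) (l : ℕ) :
    factorialMoment (envDist q (n + 1)) (l + 1) ≤
      ∑ s ∈ range l, partialBell (factorialMoment (q n)) (l + 1) (s + 1) *
          factorialMoment (envDist q n) (s + 1) +
        ENNReal.ofReal (pmfMean (q n)) ^ (l + 1) * factorialMoment (envDist q n) (l + 1) := by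
  have hqn := hq n n.lt_succ_self
  calc factorialMoment (envDist q (n + 1)) (l + 1)
      ≤ ∑' r, partialBell (factorialMoment (q n)) (l + 1) r * factorialMoment (envDist q n) r :=
        factorialMoment_pgfCompDist_le (envDist_nonneg fun i hi => (hq i (by omega)).1) hqn.1
          (factorialMoment_zero hqn.1 hqn.2.1).le _
    _ = _ := by
        rw [tsum_eq_zero_add' ENNReal.summable, tsum_eq_sum (s := range (l + 1)) fun s hs =>
          by rw [partialBell_eq_zero_of_lt _ (by simpa using hs), zero_mul],
          sum_range_succ, partialBell_self, factorialMoment_one hqn.1 hqn.2.2.1]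
        simp [partialBell]

theorem sum_mul_pow_le_add_one_pow_mul (G x : ℝ≥0∞) (l : ℕ) :
    ∑ s ∈ range l, G * (G + 1) ^ (s + 1) * x ^ s + (G + 1) ^ (l + 1) * x ^ l ≤
      (G + 1) ^ (l + 1) * (x + 1) ^ l := by
  calc ∑ s ∈ range l, G * (G + 1) ^ (s + 1) * x ^ s + (G + 1) ^ (l + 1) * x ^ l
      ≤ ∑ s ∈ range l, (G + 1) ^ (l + 1) * x ^ s + (G + 1) ^ (l + 1) * x ^ l := by
        gcongr with s hs
        calc G * (G + 1) ^ (s + 1) ≤ (G + 1) * (G + 1) ^ (s + 1) := by gcongr; exact le_self_add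
          _ = (G + 1) ^ (s + 2) := (pow_succ' _ _).symm
          _ ≤ (G + 1) ^ (l + 1) := pow_le_pow_right₀ le_add_self (by have := mem_range.1 hs; omega)
    _ = (G + 1) ^ (l + 1) * ∑ s ∈ range (l + 1), x ^ s := by rw [sum_range_succ, mul_add, mul_sum]
    _ ≤ (G + 1) ^ (l + 1) * (x + 1) ^ l := by
        gcongr
        exact sum_range_succ_pow_le_add_one_pow bot_le l

theorem factorialMoment_envDist_le {q : ℕ → ℕ → ℝ} {G : ℝ≥0∞} {L n : ℕ}
    (hq : ∀ i < n, IsOffspring (q i))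
    (hB : ∀ i < n, ∀ l ≤ L, ∀ r,
      partialBell (factorialMoment (q i)) l r ≤ G * ENNReal.ofReal (pmfMean (q i)) ^ r)
    {l : ℕ} (hl : l + 1 ≤ L) :
    factorialMoment (envDist q n) (l + 1) ≤
      (G + 1) ^ (l + 1) * n ^ l *
        ENNReal.ofReal (Real.exp (walkS q n + l * (walkS q n - walkM q n))) := by
  induction n generalizing l with
  | zero =>
    cases l <;> simp [factorialMoment_envDist_zero, walkS, walkM_zero]
  | succ n ih =>
    have hqn := hq n n.lt_succ_self
    set μ := factorialMoment (q n)
    set X := factorialMoment (envDist q n)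
    set E := ENNReal.ofReal (Real.exp (walkS q (n + 1) + l * (walkS q (n + 1) - walkM q (n + 1))))
    have hX : ∀ s ≤ l, ENNReal.ofReal (pmfMean (q n)) ^ (s + 1) * X (s + 1) ≤
        (G + 1) ^ (s + 1) * n ^ s * E := fun s hs =>
      calc ENNReal.ofReal (pmfMean (q n)) ^ (s + 1) * X (s + 1)
          ≤ ENNReal.ofReal (pmfMean (q n)) ^ (s + 1) * ((G + 1) ^ (s + 1) * n ^ s *
              ENNReal.ofReal (Real.exp (walkS q n + s * (walkS q n - walkM q n)))) := by
            gcongr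
            exact ih (fun i hi => hq i (by omega)) (fun i hi => hB i (by omega)) (by omega)
        _ ≤ (G + 1) ^ (s + 1) * n ^ s * E := by
            rw [mul_left_comm]
            gcongr
            exact ofReal_pmfMean_pow_mul_exp_le q hqn.2.2.2 hs
    calc factorialMoment (envDist q (n + 1)) (l + 1)
        ≤ ∑ s ∈ range l, partialBell μ (l + 1) (s + 1) * X (s + 1) +
            ENNReal.ofReal (pmfMean (q n)) ^ (l + 1) * X (l + 1) :=
          factorialMoment_envDist_succ_le hq l
      _ ≤ ∑ s ∈ range l, G * (G + 1) ^ (s + 1) * n ^ s * E + (G + 1) ^ (l + 1) * n ^ l * E := by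
          refine add_le_add (sum_le_sum fun s hs => ?_) (hX l le_rfl)
          calc partialBell μ (l + 1) (s + 1) * X (s + 1)
              ≤ G * ENNReal.ofReal (pmfMean (q n)) ^ (s + 1) * X (s + 1) := by
                gcongr
                exact hB n n.lt_succ_self (l + 1) hl (s + 1)
            _ ≤ G * ((G + 1) ^ (s + 1) * n ^ s * E) := by
                rw [mul_assoc]
                exact mul_le_mul_right (hX s (by have := mem_range.1 hs; omega)) G
            _ = G * (G + 1) ^ (s + 1) * n ^ s * E := by ring
      _ ≤ (G + 1) ^ (l + 1) * ((n + 1 : ℕ) : ℝ≥0∞) ^ l * E := by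
          rw [← sum_mul, ← add_mul, Nat.cast_succ]
          exact mul_le_mul_left (sum_mul_pow_le_add_one_pow_mul G n l) E

theorem Nat.cast_ceil_sub_one_lt {β : ℝ} (h : 1 ≤ ⌈β⌉₊ - 1) : ((⌈β⌉₊ - 1 : ℕ) : ℝ) < β := by
  have hβ : ((1 : ℕ) : ℝ) < β := Nat.lt_ceil.1 (by omega)
  push_cast at hβ
  rw [Nat.cast_sub (by omega), Nat.cast_one, sub_lt_iff_lt_add]
  exact Nat.ceil_lt_add_one (by linarith)

theorem factorial_moment_bound_general (β d : ℝ) (hd : 0 < d) :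
    ∃ c : ℝ, 0 < c ∧ ∀ n : ℕ, 1 ≤ n → ∀ q : ℕ → ℕ → ℝ,
      (∀ i < n, IsOffspring (q i)) → (∀ i < n, TailCond β d (q i)) →
      ∀ l : ℕ, 1 ≤ l → l ≤ ⌈β⌉₊ - 1 →
        (∑' j : ℕ, ENNReal.ofReal
            ((∏ i ∈ Finset.range l, ((j : ℝ) - i)) * envDist q n j)) ≤
          ENNReal.ofReal (c * (n : ℝ) ^ (l - 1) * Real.exp (walkS q n) *
            Real.exp (((l : ℝ) - 1) * (walkS q n - walkM q n))) := by
  set L := ⌈β⌉₊ - 1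
  obtain ⟨G, hG_def⟩ : ∃ G, G = (2 ^ L * tailMomentConst β d L) ^ L := ⟨_, rfl⟩
  have hG : 0 ≤ G := by
    have := one_le_tailMomentConst β d L
    rw [hG_def]
    positivity
  refine ⟨(G + 1) ^ L, by positivity, fun n _ q hq htail l hl hlL => ?_⟩
  obtain ⟨k, rfl⟩ : ∃ k, l = k + 1 := ⟨l - 1, by omega⟩
  have hLβ : (L : ℝ) < β := Nat.cast_ceil_sub_one_lt (by omega)
  have hmain := factorialMoment_envDist_le hq (fun i hi l hl r =>
    partialBell_factorialMoment_le_of_tailCond hd.le (hq i hi) (htail i hi) hLβ hl r) hlL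
  rw [← hG_def] at hmain
  calc ∑' j : ℕ, ENNReal.ofReal ((∏ i ∈ range (k + 1), ((j : ℝ) - i)) * envDist q n j)
      = factorialMoment (envDist q n) (k + 1) := by
        refine tsum_congr fun j => ?_
        rw [prod_range_natCast_sub_eq_descFactorial, ENNReal.ofReal_mul (by positivity),
          ENNReal.ofReal_natCast]
    _ ≤ (ENNReal.ofReal G + 1) ^ (k + 1) * n ^ k *
          ENNReal.ofReal (Real.exp (walkS q n + k * (walkS q n - walkM q n))) := hmain
    _ ≤ (ENNReal.ofReal G + 1) ^ L * n ^ k *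
          ENNReal.ofReal (Real.exp (walkS q n + k * (walkS q n - walkM q n))) := by
        gcongr
        exact le_add_self
    _ = _ := by
        rw [Nat.add_sub_cancel, Nat.cast_succ, add_sub_cancel_right, mul_assoc _ (Real.exp _),
          ← Real.exp_add, ENNReal.ofReal_mul (by positivity), ENNReal.ofReal_mul (by positivity),
          ENNReal.ofReal_pow (by positivity), ENNReal.ofReal_pow n.cast_nonneg,
          ENNReal.ofReal_add hG zero_le_one, ENNReal.ofReal_one, ENNReal.ofReal_natCast]

/-- for `β > 2` and `d > 0` there is `c = c(β,d) < ∞` such that for every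
`n ≥ 1`, every tuple satisfying `H(β,d)` and every `1 ≤ l ≤ ⌈β⌉ - 1`, the `l`-th factorial
moment `F^{(l)}(1) = ∑_j j(j-1)⋯(j-l+1) P_j` of the composed distribution satisfies
`F^{(l)}(1) ≤ c n^{l-1} e^{S_n} e^{(l-1)(S_n - M_n)}` (in particular it is finite). -/
theorem factorial_moment_bound (β d : ℝ) (hβ : 2 < β) (hd : 0 < d) :
    ∃ c : ℝ, 0 < c ∧ ∀ n : ℕ, 1 ≤ n → ∀ q : ℕ → ℕ → ℝ,
      (∀ i < n, IsOffspring (q i)) → (∀ i < n, TailCond β d (q i)) →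
      ∀ l : ℕ, 1 ≤ l → l ≤ ⌈β⌉₊ - 1 →
        (∑' j : ℕ, ENNReal.ofReal
            ((∏ i ∈ Finset.range l, ((j : ℝ) - i)) * envDist q n j)) ≤
          ENNReal.ofReal (c * (n : ℝ) ^ (l - 1) * Real.exp (walkS q n) *
            Real.exp (((l : ℝ) - 1) * (walkS q n - walkM q n))) :=
  factorial_moment_bound_general β d hd
end
end

section
/- The function ψ is convex on [0,∞), satisfies ψ(0)=γ, ψ(θ)≤Λ(θ) for every θ≥0, and ψ(θ+x)≤ψ(θ)+βx for all θ,x≥0. -/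
/-!
With `P(x, r) = r Λ(x / r)` the perspective of `Λ` (so `P(0, 0) = 0`), `ψ(θ)` is the infimum of
`G(θ, t, s) = tγ + βs + P(θ - s, 1 - t)` over the fibre at `θ` of a convex set of triples
`(θ, t, s)`: the branch `γ + βθ` of the minimum is the value of `G` at the boundary point
`t = 1, s = θ`. The perspective of a convex function is jointly convex, and minimizing a jointly
convex function over the fibres of a convex set yields a convex function. The other properties are
read off single points: `(t, s) = (0, 0)` gives `ψ ≤ Λ`, the shift `s ↦ s + x` gives
`ψ(θ + x) ≤ ψ(θ) + βx`, and at `θ = 0` every `G(0, t, 0) ≥ tγ + (1 - t)Λ(0) ≥ γ`.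
-/

open Set ENNReal NNReal

noncomputable section

/-- The rate function `ψ(θ) = min( γ + βθ ,
inf_{t ∈ [0,1), s ∈ [0,θ]} { tγ + βs + (1-t) Λ((θ-s)/(1-t)) } )`. -/
def psiFun (γ β : ℝ) (Λ : ℝ → ℝ≥0∞) (θ : ℝ) : ℝ≥0∞ :=
  min (ENNReal.ofReal (γ + β * θ))
    (⨅ t ∈ Ico (0 : ℝ) 1, ⨅ s ∈ Icc (0 : ℝ) θ,
      ENNReal.ofReal (t * γ + β * s) + ENNReal.ofReal (1 - t) * Λ ((θ - s) / (1 - t)))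

theorem ConvexOn.iInf_fiber {E F : Type*} [AddCommMonoid E] [Module ℝ≥0 E] [AddCommMonoid F]
    [Module ℝ≥0 F] {K : Set (E × F)} {g : E × F → ℝ≥0∞} (hg : ConvexOn ℝ≥0 K g) :
    ConvexOn ℝ≥0 (Prod.fst '' K) fun x ↦ ⨅ y ∈ Prod.mk x ⁻¹' K, g (x, y) := by
  refine ⟨hg.1.linear_image (LinearMap.fst ℝ≥0 E F), ?_⟩
  rintro _ ⟨⟨x₁, y₁⟩, h₁, rfl⟩ _ ⟨⟨x₂, y₂⟩, h₂, rfl⟩ a b - - hab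
  rcases eq_or_ne a 0 with rfl | ha
  · simp_all
  rcases eq_or_ne b 0 with rfl | hb
  · simp_all
  simp only [ENNReal.smul_def, smul_eq_mul, ENNReal.mul_iInf_of_ne (coe_ne_zero.2 ha) coe_ne_top,
    ENNReal.mul_iInf_of_ne (coe_ne_zero.2 hb) coe_ne_top, ENNReal.iInf_add, ENNReal.add_iInf]
  refine le_iInf₂ fun z₂ hz₂ ↦ le_iInf₂ fun z₁ hz₁ ↦ ?_
  calc _ ≤ g (a • (x₁, z₁) + b • (x₂, z₂)) :=
        iInf₂_le (a • z₁ + b • z₂) (hg.1 hz₁ hz₂ (zero_le : 0 ≤ a) (zero_le : 0 ≤ b) hab)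
    _ ≤ _ := hg.2 hz₁ hz₂ (zero_le : 0 ≤ a) (zero_le : 0 ≤ b) hab

theorem convexOn_ofReal : ConvexOn ℝ≥0 univ ENNReal.ofReal := by
  refine ⟨convex_univ, fun x _ y _ a b _ _ _ ↦ ?_⟩
  simp only [NNReal.smul_def, smul_eq_mul, ENNReal.smul_def]
  calc ENNReal.ofReal (a * x + b * y) ≤ ENNReal.ofReal (a * x) + ENNReal.ofReal (b * y) :=
        ENNReal.ofReal_add_le
    _ = a * ENNReal.ofReal x + b * ENNReal.ofReal y := by
        rw [ENNReal.ofReal_mul a.coe_nonneg, ENNReal.ofReal_mul b.coe_nonneg,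
          ENNReal.ofReal_coe_nnreal, ENNReal.ofReal_coe_nnreal]

/-- Points with `r = 0 < x` are excluded: `perspective Λ` is `0` there, whereas convexity would
require the value of the recession function of `Λ`. -/
def perspectiveDomain : Set (ℝ × ℝ) := {p | 0 ≤ p.1 ∧ 0 ≤ p.2 ∧ (p.2 = 0 → p.1 = 0)}

def perspective (Λ : ℝ → ℝ≥0∞) (p : ℝ × ℝ) : ℝ≥0∞ := ENNReal.ofReal p.2 * Λ (p.1 / p.2)

lemma mul_eq_zero_of_mul_eq_zero_of_imp {M₀ : Type*} [MulZeroClass M₀] [NoZeroDivisors M₀]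
    {a r x : M₀} (h : a * r = 0) (hrx : r = 0 → x = 0) :
    a * x = 0 := by
  rcases mul_eq_zero.1 h with h | h <;> simp [h, hrx]

theorem convex_perspectiveDomain : Convex ℝ≥0 perspectiveDomain := by
  rintro ⟨x₁, r₁⟩ ⟨hx₁, hr₁, h₁⟩ ⟨x₂, r₂⟩ ⟨hx₂, hr₂, h₂⟩ a b - - -
  simp only [perspectiveDomain, mem_ofPred_eq, Prod.smul_mk, Prod.mk_add_mk, NNReal.smul_def,
    smul_eq_mul] at *
  refine ⟨by positivity, by positivity, fun h ↦ ?_⟩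
  obtain ⟨h₁', h₂'⟩ := (add_eq_zero_iff_of_nonneg (by positivity) (by positivity)).1 h
  rw [mul_eq_zero_of_mul_eq_zero_of_imp h₁' h₁, mul_eq_zero_of_mul_eq_zero_of_imp h₂' h₂, add_zero]

theorem convexOn_perspective {Λ : ℝ → ℝ≥0∞} (hΛ : ConvexOn ℝ≥0 (Ici 0) Λ) :
    ConvexOn ℝ≥0 perspectiveDomain (perspective Λ) := by
  refine ⟨convex_perspectiveDomain, ?_⟩
  rintro ⟨x₁, r₁⟩ ⟨hx₁, hr₁, h₁⟩ ⟨x₂, r₂⟩ ⟨hx₂, hr₂, h₂⟩ a b - - hab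
  lift r₁ to ℝ≥0 using hr₁
  lift r₂ to ℝ≥0 using hr₂
  simp only [perspective, Prod.smul_mk, Prod.mk_add_mk, NNReal.smul_def, smul_eq_mul,
    ENNReal.smul_def, ← NNReal.coe_mul, ← NNReal.coe_add, ENNReal.ofReal_coe_nnreal]
  set r := a * r₁ + b * r₂
  rcases eq_or_ne r 0 with hr | hr
  · simp [hr]
  set c := a * r₁ / r
  set d := b * r₂ / r
  have hcd : c + d = 1 := by rw [← add_div, div_self hr]
  have harg : ((a : ℝ) * x₁ + b * x₂) / r = c • (x₁ / r₁) + d • (x₂ / r₂) := by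
    have e₁ : (r₁ : ℝ) * (x₁ / r₁) = x₁ := mul_div_cancel_of_imp' h₁
    have e₂ : (r₂ : ℝ) * (x₂ / r₂) = x₂ := mul_div_cancel_of_imp' h₂
    simp only [c, d, NNReal.smul_def, smul_eq_mul, NNReal.coe_div, NNReal.coe_mul]
    calc ((a : ℝ) * x₁ + b * x₂) / r = (a * (r₁ * (x₁ / r₁)) + b * (r₂ * (x₂ / r₂))) / r := by
          rw [e₁, e₂]
      _ = _ := by ring
  have hu₁ : x₁ / r₁ ∈ Ici (0 : ℝ) := div_nonneg hx₁ r₁.2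
  have hu₂ : x₂ / r₂ ∈ Ici (0 : ℝ) := div_nonneg hx₂ r₂.2
  calc (r : ℝ≥0∞) * Λ (((a : ℝ) * x₁ + b * x₂) / r)
      ≤ r * (c * Λ (x₁ / r₁) + d * Λ (x₂ / r₂)) := by
        rw [harg]; gcongr; exact hΛ.2 hu₁ hu₂ zero_le zero_le hcd
    _ = a * (r₁ * Λ (x₁ / r₁)) + b * (r₂ * Λ (x₂ / r₂)) := by
        rw [mul_add, ← mul_assoc, ← mul_assoc, ← coe_mul, ← coe_mul, mul_div_cancel₀ _ hr,
          mul_div_cancel₀ _ hr, coe_mul, coe_mul, mul_assoc, mul_assoc]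

def psiArg (p : ℝ × ℝ × ℝ) : ℝ × ℝ := (p.1 - p.2.2, 1 - p.2.1)

def psiDomain : Set (ℝ × ℝ × ℝ) := {p | 0 ≤ p.2.1 ∧ 0 ≤ p.2.2 ∧ psiArg p ∈ perspectiveDomain}

def psiObjective (γ β : ℝ) (Λ : ℝ → ℝ≥0∞) (p : ℝ × ℝ × ℝ) : ℝ≥0∞ :=
  ENNReal.ofReal (p.2.1 * γ + β * p.2.2) + perspective Λ (psiArg p)

lemma psiArg_smul_add_smul (p q : ℝ × ℝ × ℝ) {a b : ℝ≥0} (hab : a + b = 1) :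
    psiArg (a • p + b • q) = a • psiArg p + b • psiArg q := by
  have hab' : (a : ℝ) + b = 1 := by rw [← NNReal.coe_add, hab, NNReal.coe_one]
  ext <;> simp only [psiArg, Prod.fst_add, Prod.snd_add, Prod.smul_fst, Prod.smul_snd,
    NNReal.smul_def, smul_eq_mul]
  · ring
  · linear_combination -hab'

theorem convex_psiDomain : Convex ℝ≥0 psiDomain := by
  rintro p ⟨ht₁, hs₁, hp⟩ q ⟨ht₂, hs₂, hq⟩ a b ha hb hab
  refine ⟨?_, ?_, psiArg_smul_add_smul p q hab ▸ convex_perspectiveDomain hp hq ha hb hab⟩ <;>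
  · simp only [Prod.snd_add, Prod.fst_add, Prod.smul_snd, Prod.smul_fst, NNReal.smul_def,
      smul_eq_mul]
    positivity

theorem convexOn_psiObjective {Λ : ℝ → ℝ≥0∞} (hΛ : ConvexOn ℝ≥0 (Ici 0) Λ) (γ β : ℝ) :
    ConvexOn ℝ≥0 psiDomain (psiObjective γ β Λ) := by
  refine ⟨convex_psiDomain, fun p hp q hq a b ha hb hab ↦ ?_⟩
  have hlin : (a • p + b • q).2.1 * γ + β * (a • p + b • q).2.2 =
      a • (p.2.1 * γ + β * p.2.2) + b • (q.2.1 * γ + β * q.2.2) := by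
    simp only [Prod.snd_add, Prod.smul_snd, Prod.fst_add, Prod.smul_fst, NNReal.smul_def,
      smul_eq_mul]
    ring
  calc psiObjective γ β Λ (a • p + b • q)
      ≤ (a • ENNReal.ofReal (p.2.1 * γ + β * p.2.2) + b • ENNReal.ofReal (q.2.1 * γ + β * q.2.2))
        + (a • perspective Λ (psiArg p) + b • perspective Λ (psiArg q)) := by
        rw [psiObjective, hlin, psiArg_smul_add_smul p q hab]
        exact add_le_add (convexOn_ofReal.2 trivial trivial ha hb hab)
          ((convexOn_perspective hΛ).2 hp.2.2 hq.2.2 ha hb hab)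
    _ = a • psiObjective γ β Λ p + b • psiObjective γ β Λ q := by
        simp only [psiObjective, smul_add]
        exact add_add_add_comm ..

lemma psiDomain_fiber {θ : ℝ} (hθ : 0 ≤ θ) :
    Prod.mk θ ⁻¹' psiDomain = insert (1, θ) (Ico 0 1 ×ˢ Icc 0 θ) := by
  ext ⟨t, s⟩
  simp only [psiDomain, perspectiveDomain, psiArg, mem_preimage, mem_ofPred_eq, mem_insert_iff,
    Prod.mk.injEq, mem_prod, mem_Ico, mem_Icc, sub_nonneg, sub_eq_zero]
  constructor
  · rintro ⟨ht, hs, hsθ, ht1, hst⟩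
    rcases ht1.lt_or_eq with ht1 | rfl
    · exact Or.inr ⟨⟨ht, ht1⟩, hs, hsθ⟩
    · exact Or.inl ⟨rfl, (hst rfl).symm⟩
  · rintro (⟨rfl, rfl⟩ | ⟨⟨ht, ht1⟩, hs, hsθ⟩)
    · exact ⟨zero_le_one, hθ, le_rfl, le_rfl, fun _ ↦ rfl⟩
    · exact ⟨ht, hs, hsθ, ht1.le, fun h ↦ absurd h ht1.ne'⟩

lemma fst_image_psiDomain : Prod.fst '' psiDomain = Ici 0 := by
  ext θ
  constructor
  · rintro ⟨p, ⟨-, hs, hθs, -⟩, rfl⟩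
    have : 0 ≤ p.1 - p.2.2 := hθs
    exact mem_Ici.2 (by linarith)
  · intro hθ
    refine ⟨(θ, 1, θ), ?_, rfl⟩
    rw [← mem_preimage (f := Prod.mk θ), psiDomain_fiber hθ]
    exact mem_insert _ _

section psiFun

variable {γ β : ℝ} {Λ : ℝ → ℝ≥0∞}

lemma psiFun_eq_iInf {θ : ℝ} (hθ : 0 ≤ θ) :
    psiFun γ β Λ θ = ⨅ y ∈ Prod.mk θ ⁻¹' psiDomain, psiObjective γ β Λ (θ, y) := by
  rw [psiDomain_fiber hθ, iInf_insert, biInf_prod, psiFun]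
  congr 1
  simp [psiObjective, perspective, psiArg]

lemma psiFun_le_psiObjective {p : ℝ × ℝ × ℝ} (hp : p ∈ psiDomain) :
    psiFun γ β Λ p.1 ≤ psiObjective γ β Λ p := by
  have hθ : p.1 ∈ Ici 0 := fst_image_psiDomain ▸ mem_image_of_mem Prod.fst hp
  rw [psiFun_eq_iInf hθ]
  exact iInf₂_le p.2 hp

theorem convexOn_psiFun (hΛ : ConvexOn ℝ≥0 (Ici 0) Λ) : ConvexOn ℝ≥0 (Ici 0) (psiFun γ β Λ) := by
  rw [← fst_image_psiDomain]
  refine (convexOn_psiObjective hΛ γ β).iInf_fiber.congr fun θ hθ ↦ ?_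
  rw [fst_image_psiDomain] at hθ
  exact (psiFun_eq_iInf hθ).symm

theorem psiFun_zero (hγΛ : ENNReal.ofReal γ ≤ Λ 0) : psiFun γ β Λ 0 = ENNReal.ofReal γ := by
  refine le_antisymm ?_ ?_
  · calc psiFun γ β Λ 0 ≤ psiObjective γ β Λ (0, 1, 0) :=
          psiFun_le_psiObjective ⟨zero_le_one, le_rfl, by simp [psiArg, perspectiveDomain]⟩
      _ = ENNReal.ofReal γ := by simp [psiObjective, perspective, psiArg]
  rw [psiFun_eq_iInf le_rfl]
  refine le_iInf₂ fun ⟨t, s⟩ ⟨ht, hs, hs0, ht1, _⟩ ↦ ?_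
  obtain rfl : s = 0 := le_antisymm (by simpa [psiArg] using hs0) hs
  have ht1 : 0 ≤ 1 - t := ht1
  calc ENNReal.ofReal γ = ENNReal.ofReal (t * γ + (1 - t) * γ) := by congr 1; ring
    _ ≤ ENNReal.ofReal (t * γ) + ENNReal.ofReal (1 - t) * ENNReal.ofReal γ := by
        rw [← ENNReal.ofReal_mul ht1]; exact ENNReal.ofReal_add_le
    _ ≤ psiObjective γ β Λ (0, t, 0) := by
        simp only [psiObjective, perspective, psiArg, mul_zero, add_zero, sub_zero, zero_div]
        gcongr

theorem psiFun_le_Λ (θ : ℝ) (hθ : 0 ≤ θ) : psiFun γ β Λ θ ≤ Λ θ :=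
  calc psiFun γ β Λ θ ≤ psiObjective γ β Λ (θ, 0, 0) :=
        psiFun_le_psiObjective ⟨le_rfl, le_rfl, by simpa [psiArg, perspectiveDomain] using hθ⟩
    _ = Λ θ := by simp [psiObjective, perspective, psiArg]

theorem psiFun_add_le {θ x : ℝ} (hθ : 0 ≤ θ) (hx : 0 ≤ x) :
    psiFun γ β Λ (θ + x) ≤ psiFun γ β Λ θ + ENNReal.ofReal (β * x) := by
  rw [psiFun_eq_iInf hθ]
  simp only [ENNReal.iInf_add]
  refine le_iInf₂ fun ⟨t, s⟩ ⟨ht, hs, hp⟩ ↦ ?_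
  have harg : psiArg (θ + x, t, s + x) = psiArg (θ, t, s) := by simp [psiArg]
  calc psiFun γ β Λ (θ + x) ≤ psiObjective γ β Λ (θ + x, t, s + x) :=
        psiFun_le_psiObjective ⟨ht, add_nonneg hs hx, harg ▸ hp⟩
    _ ≤ psiObjective γ β Λ (θ, t, s) + ENNReal.ofReal (β * x) := by
        rw [psiObjective, psiObjective, harg, add_right_comm]
        gcongr
        rw [mul_add, ← add_assoc]
        exact ENNReal.ofReal_add_le

end psiFun

theorem psiFun_properties_general (Λ : ℝ → ℝ≥0∞) (hΛ : ConvexOn ℝ≥0 (Ici (0 : ℝ)) Λ)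
    (γ β : ℝ) (hγΛ : ENNReal.ofReal γ ≤ Λ 0) :
    ConvexOn ℝ≥0 (Ici (0 : ℝ)) (psiFun γ β Λ) ∧
    psiFun γ β Λ 0 = ENNReal.ofReal γ ∧
    (∀ θ : ℝ, 0 ≤ θ → psiFun γ β Λ θ ≤ Λ θ) ∧
    (∀ θ x : ℝ, 0 ≤ θ → 0 ≤ x →
      psiFun γ β Λ (θ + x) ≤ psiFun γ β Λ θ + ENNReal.ofReal (β * x)) :=
  ⟨convexOn_psiFun hΛ, psiFun_zero hγΛ, psiFun_le_Λ, fun _ _ ↦ psiFun_add_le⟩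

/-- `ψ` is convex on `[0,∞)`, satisfies `ψ(0) = γ`, `ψ(θ) ≤ Λ(θ)` for every
`θ ≥ 0`, and `ψ(θ + x) ≤ ψ(θ) + βx` for all `θ, x ≥ 0`. -/
theorem psiFun_properties (Λ : ℝ → ℝ≥0∞) (hΛ : ConvexOn ℝ≥0 (Ici (0 : ℝ)) Λ)
    (γ β : ℝ) (hγ0 : 0 ≤ γ) (hγΛ : ENNReal.ofReal γ ≤ Λ 0) (hβ : 0 < β) :
    ConvexOn ℝ≥0 (Ici (0 : ℝ)) (psiFun γ β Λ) ∧
    psiFun γ β Λ 0 = ENNReal.ofReal γ ∧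
    (∀ θ : ℝ, 0 ≤ θ → psiFun γ β Λ θ ≤ Λ θ) ∧
    (∀ θ x : ℝ, 0 ≤ θ → 0 ≤ x →
      psiFun γ β Λ (θ + x) ≤ psiFun γ β Λ θ + ENNReal.ofReal (β * x)) :=
  psiFun_properties_general Λ hΛ γ β hγΛ
end
end

section
/- If κ:[0,∞)→[0,∞) is a convex function with κ(0)≤γ, κ(θ)≤Λ(θ) for every θ≥0, and κ(θ+x)≤κ(θ)+βx for all θ,x≥0, then κ(θ)≤ψ(θ) for every θ≥0. In particular, ψ is the largest convex function satisfying these three properties. -/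
open Set ENNReal NNReal

/-! Write `θ - s = t • 0 + (1 - t) • u` with `u = (θ - s) / (1 - t)`. The growth bound gives
`κ θ ≤ κ (θ - s) + β s`, convexity gives `κ (θ - s) ≤ t κ 0 + (1 - t) κ u`, and `κ 0 ≤ γ`,
`κ u ≤ Λ u` finish the comparison with each term of the infimum; the term `γ + β θ` is the
case `s = θ` of the growth bound. -/

noncomputable section

theorem ConvexOn.le_mul_apply_zero_add_mul_apply_div {f : ℝ → ℝ} (hf : ConvexOn ℝ (Ici 0) f)
    {t x : ℝ} (ht0 : 0 ≤ t) (ht1 : t < 1) (hx : 0 ≤ x) :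
    f x ≤ t * f 0 + (1 - t) * f (x / (1 - t)) := by
  have h1t : 0 < 1 - t := sub_pos.2 ht1
  have h := hf.2 self_mem_Ici (mem_Ici.2 (div_nonneg hx h1t.le)) ht0 h1t.le (by ring)
  simpa only [smul_eq_mul, mul_zero, zero_add, mul_div_cancel₀ x h1t.ne'] using h

theorem ENNReal.ofReal_add_mul_le (a : ℝ) {b : ℝ} (hb : 0 ≤ b) (c : ℝ) :
    ENNReal.ofReal (a + b * c) ≤ ENNReal.ofReal a + ENNReal.ofReal b * ENNReal.ofReal c := by
  rw [← ENNReal.ofReal_mul hb]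
  exact ENNReal.ofReal_add_le

section GrowthBound

variable {κ : ℝ → ℝ} {γ β : ℝ}

theorem le_add_mul_of_apply_add_le (hκγ : κ 0 ≤ γ)
    (hκβ : ∀ θ x : ℝ, 0 ≤ θ → 0 ≤ x → κ (θ + x) ≤ κ θ + β * x) {θ : ℝ} (hθ : 0 ≤ θ) :
    κ θ ≤ γ + β * θ := by
  have h := hκβ 0 θ le_rfl hθ
  rw [zero_add] at h
  linarith

theorem le_mul_add_mul_add_mul_apply_div_of_apply_add_le (hκconv : ConvexOn ℝ (Ici 0) κ)
    (hκγ : κ 0 ≤ γ) (hκβ : ∀ θ x : ℝ, 0 ≤ θ → 0 ≤ x → κ (θ + x) ≤ κ θ + β * x)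
    {θ t s : ℝ} (ht0 : 0 ≤ t) (ht1 : t < 1) (hs0 : 0 ≤ s) (hsθ : s ≤ θ) :
    κ θ ≤ t * γ + β * s + (1 - t) * κ ((θ - s) / (1 - t)) := by
  have hgrowth : κ θ ≤ κ (θ - s) + β * s := by
    simpa using hκβ (θ - s) s (sub_nonneg.2 hsθ) hs0
  have hconv := hκconv.le_mul_apply_zero_add_mul_apply_div ht0 ht1 (sub_nonneg.2 hsθ)
  nlinarith

end GrowthBound

theorem psiFun_largest_general (Λ : ℝ → ℝ≥0∞)
    (γ β : ℝ)
    (κ : ℝ → ℝ) (hκconv : ConvexOn ℝ (Ici (0 : ℝ)) κ)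
    (hκγ : κ 0 ≤ γ)
    (hκΛ : ∀ θ : ℝ, 0 ≤ θ → ENNReal.ofReal (κ θ) ≤ Λ θ)
    (hκβ : ∀ θ x : ℝ, 0 ≤ θ → 0 ≤ x → κ (θ + x) ≤ κ θ + β * x) :
    ∀ θ : ℝ, 0 ≤ θ → ENNReal.ofReal (κ θ) ≤ psiFun γ β Λ θ := by
  intro θ hθ
  refine le_min (ENNReal.ofReal_le_ofReal (le_add_mul_of_apply_add_le hκγ hκβ hθ)) ?_
  refine le_iInf₂ fun t ⟨ht0, ht1⟩ => le_iInf₂ fun s ⟨hs0, hsθ⟩ => ?_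
  have h1t : 0 < 1 - t := sub_pos.2 ht1
  have hu : 0 ≤ (θ - s) / (1 - t) := div_nonneg (sub_nonneg.2 hsθ) h1t.le
  calc ENNReal.ofReal (κ θ)
      ≤ ENNReal.ofReal (t * γ + β * s + (1 - t) * κ ((θ - s) / (1 - t))) :=
        ENNReal.ofReal_le_ofReal <|
          le_mul_add_mul_add_mul_apply_div_of_apply_add_le hκconv hκγ hκβ ht0 ht1 hs0 hsθ
    _ ≤ ENNReal.ofReal (t * γ + β * s) +
          ENNReal.ofReal (1 - t) * ENNReal.ofReal (κ ((θ - s) / (1 - t))) :=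
        ENNReal.ofReal_add_mul_le _ h1t.le _
    _ ≤ _ := by gcongr; exact hκΛ _ hu

/-- if `κ : [0,∞) → [0,∞)` is convex with `κ(0) ≤ γ`, `κ(θ) ≤ Λ(θ)` for every
`θ ≥ 0` and `κ(θ + x) ≤ κ(θ) + βx` for all `θ, x ≥ 0`, then `κ ≤ ψ` on `[0,∞)`;
in particular `ψ` is the largest convex function with these three properties. -/
theorem psiFun_largest (Λ : ℝ → ℝ≥0∞) (hΛ : ConvexOn ℝ≥0 (Ici (0 : ℝ)) Λ)
    (γ β : ℝ) (hγ0 : 0 ≤ γ) (hγΛ : ENNReal.ofReal γ ≤ Λ 0) (hβ : 0 < β)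
    (κ : ℝ → ℝ) (hκconv : ConvexOn ℝ (Ici (0 : ℝ)) κ)
    (hκ0 : ∀ θ : ℝ, 0 ≤ θ → 0 ≤ κ θ)
    (hκγ : κ 0 ≤ γ)
    (hκΛ : ∀ θ : ℝ, 0 ≤ θ → ENNReal.ofReal (κ θ) ≤ Λ θ)
    (hκβ : ∀ θ x : ℝ, 0 ≤ θ → 0 ≤ x → κ (θ + x) ≤ κ θ + β * x) :
    ∀ θ : ℝ, 0 ≤ θ → ENNReal.ofReal (κ θ) ≤ psiFun γ β Λ θ :=
  psiFun_largest_general Λ γ β κ hκconv hκγ hκΛ hκβ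
end
end
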